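/- arXiv:2411.10941 — 2 statements merged into one kernel-verified Lean document; each statement's English description precedes it below -/
import Mathlib

section
/- The parameter-relaxation map Φ is not injective: for every μ ≠ 0, every Ixx, Iyy, Izz ≠ 0, every a ∈ ℝ³, b, c, d ∈ ℝ^m, and every λ ∈ ℝ with λ ≠ 0, one has Φ(μ, λIxx, λIyy, λIzz, a, λb, λc, λd) = Φ(μ, Ixx, Iyy, Izz, a, b, c, d). In particular, if λ ≠ 1, the two argument tuples are distinct (since (Ixx, Iyy, Izz) ≠ 0) but have equal relaxed parameter vectors, so the original parameters cannot be recovered from the relaxed parameters. -/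
/-!
The parameter-relaxation map `Φ(μ, Ixx, Iyy, Izz, a, b, c, d) =
(1/μ, a/μ, d/Ixx, c/Iyy, b/Izz, κ)` is not injective: the original parameters
cannot be recovered from the relaxed parameters.
-/

/-- The parameter-relaxation map `Φ`, sending `(μ, Ixx, Iyy, Izz, a, b, c, d)` to the
relaxed parameter vector `(1/μ, a/μ, d/Ixx, c/Iyy, b/Izz, κ)` with
`κ = ((Izz−Iyy)/Ixx, (Ixx−Izz)/Iyy, (Iyy−Ixx)/Izz)`. -/
noncomputable def Phi (m : ℕ) (μ Ixx Iyy Izz : ℝ) (a : Fin 3 → ℝ) (b c d : Fin m → ℝ) :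
    ℝ × (Fin 3 → ℝ) × (Fin m → ℝ) × (Fin m → ℝ) × (Fin m → ℝ) × (Fin 3 → ℝ) :=
  (1 / μ,
   fun i => a i / μ,
   fun k => d k / Ixx,
   fun k => c k / Iyy,
   fun k => b k / Izz,
   ![(Izz - Iyy) / Ixx, (Ixx - Izz) / Iyy, (Iyy - Ixx) / Izz])

/-- `Φ` is not injective: scaling the inertias and the rotor parameters `b, c, d` by any
`λ ≠ 0` leaves the relaxed parameter vector unchanged; if moreover `λ ≠ 1`, the two
argument tuples are distinct (since the inertias are nonzero). -/
theorem phi_not_injective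
    (m : ℕ) (hm : 1 ≤ m) (μ Ixx Iyy Izz : ℝ)
    (hμ : μ ≠ 0) (hxx : Ixx ≠ 0) (hyy : Iyy ≠ 0) (hzz : Izz ≠ 0)
    (a : Fin 3 → ℝ) (b c d : Fin m → ℝ) (lam : ℝ) (hlam : lam ≠ 0) :
    Phi m μ (lam * Ixx) (lam * Iyy) (lam * Izz) a (lam • b) (lam • c) (lam • d)
      = Phi m μ Ixx Iyy Izz a b c d
    ∧ (lam ≠ 1 →
        (μ, lam * Ixx, lam * Iyy, lam * Izz, a, lam • b, lam • c, lam • d)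
          ≠ (μ, Ixx, Iyy, Izz, a, b, c, d)) := by
  constructor
  · unfold Phi
    refine Prod.ext rfl (Prod.ext rfl (Prod.ext ?_ (Prod.ext ?_ (Prod.ext ?_ ?_))))
    · funext k; simp [Pi.smul_apply, smul_eq_mul]
      field_simp
    · funext k; simp [Pi.smul_apply, smul_eq_mul]
      field_simp
    · funext k; simp [Pi.smul_apply, smul_eq_mul]
      field_simp
    · funext i
      fin_cases i <;> simp <;> rw [← mul_sub] <;> field_simp <;> ring
  · intro hl1 h
    have h2 : lam * Ixx = Ixx := congrArg (fun p => p.2.1) h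
    have : lam = 1 := mul_right_cancel₀ hxx (by rw [h2, one_mul])
    exact hl1 this
end

section
/- Exactness of the relaxation under forward-Euler data: let θ = (μ, Ixx, Iyy, Izz, a, b, c, d) with μ ≠ 0, Ixx ≠ 0, Iyy ≠ 0, Izz ≠ 0, let g ∈ ℝ³ be a gravity vector, and let M ≥ 1, Δt ∈ ℝ, x₀, …, x_M ∈ ℝ¹³, u₀, …, u_{M−1} ∈ ℝ^m, w₀, …, w_{M−1} ∈ ℝ¹³ be such that x_{j+1} = x_j + Δt·f(x_j, u_j, θ) + w_j for all j < M, where f is the nonlinear multirotor dynamics. Then the relaxed parameter vector ϑ = (1/μ, a/μ, d/Ixx, c/Iyy, b/Izz, κ) ∈ ℝ^{7+3m} satisfies all of the affine LQ-MHPE constraints: x_{j+1} = x_j + Δt·(F(x_j) + G(x_j, u_j)·ϑ) + w_j for all j < M. In particular, the LQ-MHPE constraint set is nonempty whenever the data are generated by the true nonlinear model. -/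
/-!
Exactness of the affine-in-parameter relaxation under forward-Euler data: data
generated by the true nonlinear multirotor model satisfy the affine LQ-MHPE
constraints with the relaxed parameter vector, so the LQ-MHPE constraint set is
nonempty.
-/
open Matrix

/-- Index type for the 13-dimensional quadrotor state `(p, q, v, ω) ∈ ℝ³×ℝ⁴×ℝ³×ℝ³`. -/
abbrev StateIdx : Type := Fin 3 ⊕ Fin 4 ⊕ Fin 3 ⊕ Fin 3

/-- Index type for the `(7+3m)`-dimensional relaxed parameter vector
`(1/μ, a/μ, d/Ixx, c/Iyy, b/Izz, κ)`. -/
abbrev ParamIdx (m : ℕ) : Type := Fin 1 ⊕ Fin 3 ⊕ Fin m ⊕ Fin m ⊕ Fin m ⊕ Fin 3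

def posOf (x : StateIdx → ℝ) : Fin 3 → ℝ := fun i => x (Sum.inl i)
def quatOf (x : StateIdx → ℝ) : Fin 4 → ℝ := fun i => x (Sum.inr (Sum.inl i))
def velOf (x : StateIdx → ℝ) : Fin 3 → ℝ := fun i => x (Sum.inr (Sum.inr (Sum.inl i)))
def angOf (x : StateIdx → ℝ) : Fin 3 → ℝ := fun i => x (Sum.inr (Sum.inr (Sum.inr i)))

/-- Rotation matrix `Q(q)` from body to inertial frame, `q = (q_w, q_x, q_y, q_z)`. -/
def Qrot (q : Fin 4 → ℝ) : Matrix (Fin 3) (Fin 3) ℝ :=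
  !![q 0 ^ 2 + q 1 ^ 2 - q 2 ^ 2 - q 3 ^ 2, 2 * (q 1 * q 2 - q 0 * q 3),
       2 * (q 1 * q 3 + q 0 * q 2);
     2 * (q 1 * q 2 + q 0 * q 3), q 0 ^ 2 - q 1 ^ 2 + q 2 ^ 2 - q 3 ^ 2,
       2 * (q 2 * q 3 - q 0 * q 1);
     2 * (q 1 * q 3 - q 0 * q 2), 2 * (q 2 * q 3 + q 0 * q 1),
       q 0 ^ 2 - q 1 ^ 2 - q 2 ^ 2 + q 3 ^ 2]

/-- Attitude kinematics `Ξ(q)ω`, the components of the quaternion product `q ⊗ (0, ω)`. -/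
def Xi (q : Fin 4 → ℝ) (ω : Fin 3 → ℝ) : Fin 4 → ℝ :=
  ![-(q 1) * ω 0 - q 2 * ω 1 - q 3 * ω 2,
    q 0 * ω 0 + q 2 * ω 2 - q 3 * ω 1,
    q 0 * ω 1 - q 1 * ω 2 + q 3 * ω 0,
    q 0 * ω 2 + q 1 * ω 1 - q 2 * ω 0]

/-- `K ∈ ℝ^{3×m}`: first two rows zero, third row all ones. -/
def Kmat (m : ℕ) : Matrix (Fin 3) (Fin m) ℝ :=
  Matrix.of fun i _ => if i = 2 then 1 else 0

/-- `ℐ(ω) = diag(ω₂ω₃, ω₁ω₃, ω₁ω₂)`. -/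
def calI (ω : Fin 3 → ℝ) : Matrix (Fin 3) (Fin 3) ℝ :=
  Matrix.diagonal ![ω 1 * ω 2, ω 0 * ω 2, ω 0 * ω 1]

/-- The parameter-independent part `F(x) = (Q(q)v, ½Ξ(q)ω, Q(q)ᵀg − ω×v, 0₃)`. -/
noncomputable def Fvec (g : Fin 3 → ℝ) (x : StateIdx → ℝ) : StateIdx → ℝ :=
  Sum.elim ((Qrot (quatOf x)).mulVec (velOf x))
    (Sum.elim (fun i => (1 / 2 : ℝ) * Xi (quatOf x) (angOf x) i)
      (Sum.elim
        ((Qrot (quatOf x)).transpose.mulVec g - crossProduct (angOf x) (velOf x))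
        (fun _ => (0 : ℝ))))

/-- The parameter matrix `G(x,u) ∈ ℝ^{13×(7+3m)}`: first seven rows zero, then the
blocks `[K u, −𝒜(v), 0; 0, ℬ(u), −ℐ(ω)]`. -/
def Gmat {m : ℕ} (x : StateIdx → ℝ) (u : Fin m → ℝ) :
    Matrix StateIdx (ParamIdx m) ℝ :=
  Matrix.of fun i j =>
    match i with
    | Sum.inl _ => 0
    | Sum.inr (Sum.inl _) => 0
    | Sum.inr (Sum.inr (Sum.inl i)) =>
      match j with
      | Sum.inl _ => (Kmat m).mulVec u i
      | Sum.inr (Sum.inl k) => -(Matrix.diagonal (velOf x) i k)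
      | _ => 0
    | Sum.inr (Sum.inr (Sum.inr i)) =>
      match j with
      | Sum.inr (Sum.inr (Sum.inl k)) => if i = 0 then u k else 0
      | Sum.inr (Sum.inr (Sum.inr (Sum.inl k))) => if i = 1 then -(u k) else 0
      | Sum.inr (Sum.inr (Sum.inr (Sum.inr (Sum.inl k)))) =>
          if i = 2 then (-1 : ℝ) ^ (k.val + 1) * u k else 0
      | Sum.inr (Sum.inr (Sum.inr (Sum.inr (Sum.inr k)))) => -(calI (angOf x) i k)
      | _ => 0

/-- `B(b,c,d) ∈ ℝ^{3×m}`: rows `dᵀ`, `−cᵀ`, and `((−1)¹b₁, …, (−1)^m b_m)`. -/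
def Bmat {m : ℕ} (b c d : Fin m → ℝ) : Matrix (Fin 3) (Fin m) ℝ :=
  Matrix.of fun i k =>
    if i = 0 then d k else if i = 1 then -(c k) else (-1 : ℝ) ^ (k.val + 1) * b k

/-- Inertia matrix `𝒥 = diag(Ixx, Iyy, Izz)`. -/
def Jmat (Ixx Iyy Izz : ℝ) : Matrix (Fin 3) (Fin 3) ℝ :=
  Matrix.diagonal ![Ixx, Iyy, Izz]

/-- `κ = ((Izz−Iyy)/Ixx, (Ixx−Izz)/Iyy, (Iyy−Ixx)/Izz)`. -/
noncomputable def kappa (Ixx Iyy Izz : ℝ) : Fin 3 → ℝ :=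
  ![(Izz - Iyy) / Ixx, (Ixx - Izz) / Iyy, (Iyy - Ixx) / Izz]

/-- The nonlinear multirotor dynamics
`f(x,u,θ) = (Q(q)v, ½Ξ(q)ω, Q(q)ᵀg + (1/μ)(Ku − A(a)v) − ω×v, 𝒥⁻¹(B(b,c,d)u − ω×(𝒥ω)))`. -/
noncomputable def fdyn {m : ℕ} (μ Ixx Iyy Izz : ℝ) (a : Fin 3 → ℝ)
    (b c d : Fin m → ℝ) (g : Fin 3 → ℝ) (x : StateIdx → ℝ) (u : Fin m → ℝ) :
    StateIdx → ℝ :=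
  Sum.elim ((Qrot (quatOf x)).mulVec (velOf x))
    (Sum.elim (fun i => (1 / 2 : ℝ) * Xi (quatOf x) (angOf x) i)
      (Sum.elim
        ((Qrot (quatOf x)).transpose.mulVec g
          + (1 / μ) • ((Kmat m).mulVec u - (Matrix.diagonal a).mulVec (velOf x))
          - crossProduct (angOf x) (velOf x))
        ((Jmat Ixx Iyy Izz)⁻¹.mulVec
          ((Bmat b c d).mulVec u
            - crossProduct (angOf x) ((Jmat Ixx Iyy Izz).mulVec (angOf x))))))

/-- The relaxed parameter vector `ϑ = (1/μ, a/μ, d/Ixx, c/Iyy, b/Izz, κ) ∈ ℝ^{7+3m}`. -/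
noncomputable def relaxedParam {m : ℕ} (μ Ixx Iyy Izz : ℝ) (a : Fin 3 → ℝ)
    (b c d : Fin m → ℝ) : ParamIdx m → ℝ :=
  Sum.elim (fun _ => 1 / μ)
    (Sum.elim (fun i => a i / μ)
      (Sum.elim (fun k => d k / Ixx)
        (Sum.elim (fun k => c k / Iyy)
          (Sum.elim (fun k => b k / Izz) (kappa Ixx Iyy Izz)))))

lemma key {m : ℕ} (μ Ixx Iyy Izz : ℝ) (hμ : μ ≠ 0) (hxx : Ixx ≠ 0) (hyy : Iyy ≠ 0)
    (hzz : Izz ≠ 0) (a : Fin 3 → ℝ) (b c d : Fin m → ℝ) (g : Fin 3 → ℝ)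
    (xx : StateIdx → ℝ) (uu : Fin m → ℝ) :
    fdyn μ Ixx Iyy Izz a b c d g xx uu
      = Fvec g xx + (Gmat xx uu).mulVec (relaxedParam μ Ixx Iyy Izz a b c d) := by
  have hsum : ∀ (f : Fin m → ℝ) (t : ℝ),
      ∑ k, uu k * (f k / t) = (∑ k, f k * uu k) / t := by
    intro f t
    rw [Finset.sum_div]
    exact Finset.sum_congr rfl fun k _ => by ring
  funext i
  obtain (i | i | i | i) := i
  · simp [fdyn, Fvec, Gmat, Matrix.mulVec, dotProduct, Fintype.sum_sum_type]
  · simp [fdyn, Fvec, Gmat, Matrix.mulVec, dotProduct, Fintype.sum_sum_type]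
  · simp only [fdyn, Fvec, Gmat, relaxedParam, Sum.elim_inr, Sum.elim_inl,
      Matrix.mulVec, dotProduct, Fintype.sum_sum_type, Matrix.of_apply,
      Pi.add_apply, Pi.sub_apply, Pi.smul_apply, smul_eq_mul, zero_mul,
      Finset.sum_const_zero, add_zero, mul_zero]
    fin_cases i <;>
      simp [Matrix.diagonal, Fin.sum_univ_three, Fin.sum_univ_succ] <;>
      field_simp <;> ring
  · have hJ : (Jmat Ixx Iyy Izz)⁻¹ = Matrix.diagonal ![Ixx⁻¹, Iyy⁻¹, Izz⁻¹] := by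
      apply Matrix.inv_eq_right_inv
      rw [Jmat, Matrix.diagonal_mul_diagonal]
      have hv : ∀ i, ![Ixx, Iyy, Izz] i * ![Ixx⁻¹, Iyy⁻¹, Izz⁻¹] i = 1 := by
        intro i
        fin_cases i <;>
          simp [mul_inv_cancel₀, hxx, hyy, hzz]
      simp only [hv]
      exact Matrix.diagonal_one
    have hsum2 : ∀ (f : Fin m → ℝ) (t : ℝ),
        ∑ k, (-1 : ℝ) ^ (k.1 + 1) * uu k * (f k / t)
          = (∑ k, (-1 : ℝ) ^ (k.1 + 1) * f k * uu k) / t := by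
      intro f t
      rw [Finset.sum_div]
      exact Finset.sum_congr rfl fun k _ => by ring
    simp only [fdyn, Sum.elim_inr]
    rw [hJ]
    simp only [Fvec, Gmat, relaxedParam, Sum.elim_inr, Sum.elim_inl,
      Matrix.mulVec, dotProduct, Fintype.sum_sum_type, Matrix.of_apply,
      Pi.add_apply, Pi.sub_apply, zero_mul, Finset.sum_const_zero, zero_add, add_zero,
      cross_apply, Bmat, calI, kappa, Matrix.mulVec_diagonal, Jmat]
    fin_cases i <;>
      simp [Matrix.diagonal, Fin.sum_univ_three, hsum, hsum2, Matrix.mulVec,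
        dotProduct] <;>
      field_simp <;> ring

/-- If `x_{j+1} = x_j + Δt·f(x_j, u_j, θ) + w_j` for all `j < M` with the true nonlinear
dynamics `f`, then the relaxed parameter vector `ϑ = (1/μ, a/μ, d/Ixx, c/Iyy, b/Izz, κ)`
satisfies all of the affine LQ-MHPE constraints
`x_{j+1} = x_j + Δt·(F(x_j) + G(x_j, u_j)ϑ) + w_j`. -/
theorem relaxation_exact_forward_euler
    (m M : ℕ) (hm : 1 ≤ m) (hM : 1 ≤ M)
    (μ Ixx Iyy Izz : ℝ) (hμ : μ ≠ 0) (hxx : Ixx ≠ 0) (hyy : Iyy ≠ 0) (hzz : Izz ≠ 0)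
    (a : Fin 3 → ℝ) (b c d : Fin m → ℝ) (g : Fin 3 → ℝ) (Δt : ℝ)
    (x : Fin (M + 1) → StateIdx → ℝ) (u : Fin M → Fin m → ℝ)
    (w : Fin M → StateIdx → ℝ)
    (hdata : ∀ j : Fin M,
      x j.succ = x j.castSucc
        + Δt • fdyn μ Ixx Iyy Izz a b c d g (x j.castSucc) (u j) + w j) :
    ∀ j : Fin M,
      x j.succ = x j.castSucc
        + Δt • (Fvec g (x j.castSucc)
            + (Gmat (x j.castSucc) (u j)).mulVec (relaxedParam μ Ixx Iyy Izz a b c d))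
        + w j := by
  intro j
  rw [hdata j, key μ Ixx Iyy Izz hμ hxx hyy hzz a b c d g]
end
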